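/- For all n ≥ 2: if k is divisible by 2 then |Q(n,k)| ≥ 2^{(k/2)^n}, and if k is divisible by 3 then |Q(n,k)| ≥ (3·2^n)^{(k/3)^n} > 2^{n·(k/3)^n}. -/

import Mathlib

/-- An `n`-ary quasigroup on `S`. -/
def IsNQuasigroup {S : Type*} {n : ℕ} (f : (Fin n → S) → S) : Prop :=
  ∀ (i : Fin n) (x : Fin n → S), Function.Bijective fun a => f (Function.update x i a)

/-- `|Q(n,k)|`: the number of `n`-ary quasigroup operations on a fixed
`k`-element set. -/
noncomputable def numQuasigroups (n k : ℕ) : ℕ :=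
  Nat.card {f : (Fin n → Fin k) → Fin k // IsNQuasigroup f}

/-!
If `A` carries an `n`-ary quasigroup `g`, then every family `(h_u)` of `n`-ary quasigroups on `B`
indexed by `u ∈ Aⁿ` gives the quasigroup `(x, y) ↦ (g x, h_x y)` on `A × B`, and distinct families
give distinct operations; hence `|Q(n, mk)| ≥ |Q(n, k)|^{mⁿ}`. On `ZMod p` the affine operations
`c + ∑ ε_j x_j` with units `ε_j` are pairwise distinct, so `|Q(n, p)| ≥ p · φ(p)ⁿ`, which is `2`
for `p = 2` and `3 · 2ⁿ` for `p = 3`.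
-/

abbrev NQuasigroup (n : ℕ) (S : Type*) := {f : (Fin n → S) → S // IsNQuasigroup f}

section

variable {n : ℕ} {S T A B : Type*}

theorem IsNQuasigroup.conj {f : (Fin n → S) → S} (hf : IsNQuasigroup f) (e : S ≃ T) :
    IsNQuasigroup fun x => e (f (e.symm ∘ x)) := by
  intro i x
  simp_rw [Function.comp_update]
  exact e.bijective.comp ((hf i _).comp e.symm.bijective)

def NQuasigroup.congr (e : S ≃ T) : NQuasigroup n S ≃ NQuasigroup n T where
  toFun f := ⟨fun x => e (f.1 (e.symm ∘ x)), f.2.conj e⟩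
  invFun f := ⟨fun x => e.symm (f.1 (e ∘ x)), f.2.conj e.symm⟩
  left_inv f := by ext x; simp [Function.comp_def]
  right_inv f := by ext x; simp [Function.comp_def]

theorem numQuasigroups_eq_card {k : ℕ} (e : Fin k ≃ S) :
    numQuasigroups n k = Nat.card (NQuasigroup n S) :=
  Nat.card_congr (NQuasigroup.congr e)

theorem IsNQuasigroup.prod {g : (Fin n → A) → A} (hg : IsNQuasigroup g)
    {h : (Fin n → A) → (Fin n → B) → B} (hh : ∀ u, IsNQuasigroup (h u)) :
    IsNQuasigroup fun x : Fin n → A × B =>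
      (g (Prod.fst ∘ x), h (Prod.fst ∘ x) (Prod.snd ∘ x)) := by
  intro i x
  simp_rw [Function.comp_update]
  exact (Equiv.prodShear (.ofBijective _ (hg i _))
    fun a => .ofBijective _ (hh (Function.update (Prod.fst ∘ x) i a) i _)).bijective

theorem card_pow_le_card_nQuasigroup_prod [Finite A] [Finite B] {g : (Fin n → A) → A}
    (hg : IsNQuasigroup g) :
    Nat.card (NQuasigroup n B) ^ Nat.card A ^ n ≤ Nat.card (NQuasigroup n (A × B)) := by
  let Φ : ((Fin n → A) → NQuasigroup n B) → NQuasigroup n (A × B) := fun h =>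
    ⟨_, hg.prod fun u => (h u).2⟩
  have hΦ : Function.Injective Φ := by
    intro h h' heq
    funext u
    ext v
    simpa [Φ, Function.comp_def] using congr_arg (fun f => (f.1 fun j => (u j, v j)).2) heq
  simpa [Nat.card_fun] using Nat.card_le_card_of_injective Φ hΦ

theorem isNQuasigroup_affine {R : Type*} [Ring R] (c : R) (ε : Fin n → Rˣ) :
    IsNQuasigroup fun v : Fin n → R => c + ∑ j, ε j • v j := by
  intro i v
  have : ∀ a, c + ∑ j, ε j • Function.update v i a j
      = ε i • a + (c + ∑ j ∈ Finset.univ \ {i}, ε j • v j) := by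
    intro a
    rw [Finset.sum_congr rfl fun j _ => Function.apply_update (fun j x => ε j • x) v i a j,
      Finset.sum_update_of_mem (Finset.mem_univ i), add_left_comm]
  simp_rw [this]
  exact (Equiv.addRight _).bijective.comp (MulAction.bijective (ε i))

theorem card_mul_card_units_pow_le_card_nQuasigroup (R : Type*) [Ring R] [Finite R] :
    Nat.card R * Nat.card Rˣ ^ n ≤ Nat.card (NQuasigroup n R) := by
  let Φ : R × (Fin n → Rˣ) → NQuasigroup n R := fun p =>
    ⟨_, isNQuasigroup_affine p.1 p.2⟩
  have hΦ : Function.Injective Φ := by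
    rintro ⟨c, ε⟩ ⟨c', ε'⟩ h
    have hc : c = c' := by simpa [Φ] using congr_arg (fun f => f.1 0) h
    subst hc
    have hε : ∀ t, ε t = ε' t := fun t => Units.ext <| by
      simpa [Φ, Pi.single_apply, Units.smul_def] using congr_arg (fun f => f.1 (Pi.single t 1)) h
    rw [funext hε]
  simpa [Nat.card_pi] using Nat.card_le_card_of_injective Φ hΦ

theorem numQuasigroups_pow_le_numQuasigroups_mul (m k : ℕ) [NeZero m] :
    numQuasigroups n k ^ m ^ n ≤ numQuasigroups n (m * k) := by
  have e : Fin (m * k) ≃ ZMod m × Fin k :=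
    finProdFinEquiv.symm.trans ((ZMod.finEquiv m).toEquiv.prodCongr (.refl _))
  rw [numQuasigroups_eq_card (.refl _), numQuasigroups_eq_card e]
  simpa using card_pow_le_card_nQuasigroup_prod (B := Fin k) (isNQuasigroup_affine (0 : ZMod m) 1)

theorem mul_totient_pow_le_numQuasigroups (p : ℕ) [NeZero p] :
    p * p.totient ^ n ≤ numQuasigroups n p := by
  rw [numQuasigroups_eq_card (ZMod.finEquiv p).toEquiv]
  simpa [ZMod.card_units_eq_totient] using
    card_mul_card_units_pow_le_card_nQuasigroup (n := n) (ZMod p)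

theorem mul_totient_pow_pow_div_le_numQuasigroups {p k : ℕ} (hp : 0 < p) (hk : 0 < k)
    (hpk : p ∣ k) : (p * p.totient ^ n) ^ (k / p) ^ n ≤ numQuasigroups n k := by
  obtain ⟨m, rfl⟩ := hpk
  have : NeZero m := ⟨by rintro rfl; simp at hk⟩
  have : NeZero p := ⟨hp.ne'⟩
  rw [Nat.mul_div_cancel_left m hp, mul_comm p m]
  exact (Nat.pow_le_pow_left (mul_totient_pow_le_numQuasigroups p) _).trans
    (numQuasigroups_pow_le_numQuasigroups_mul m p)

end

theorem numQuasigroups_div_two_three_general {n k : ℕ} (hk : 0 < k) :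
    (2 ∣ k → numQuasigroups n k ≥ 2 ^ (k / 2) ^ n) ∧
    (3 ∣ k → numQuasigroups n k ≥ (3 * 2 ^ n) ^ (k / 3) ^ n ∧
      (3 * 2 ^ n) ^ (k / 3) ^ n > 2 ^ (n * (k / 3) ^ n)) := by
  refine ⟨fun h2 => ?_, fun h3 => ⟨?_, ?_⟩⟩
  · simpa using mul_totient_pow_pow_div_le_numQuasigroups (n := n) two_pos hk h2
  · simpa [Nat.totient_prime Nat.prime_three] using
      mul_totient_pow_pow_div_le_numQuasigroups (n := n) three_pos hk h3
  · have hpos : 0 < (k / 3) ^ n := pow_pos (Nat.div_pos (Nat.le_of_dvd hk h3) three_pos) n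
    rw [pow_mul]
    exact Nat.pow_lt_pow_left (lt_mul_of_one_lt_left (by positivity) (by norm_num)) hpos.ne'

/-- If `2 ∣ k` then `|Q(n,k)| ≥ 2^{(k/2)ⁿ}`; if `3 ∣ k` then
`|Q(n,k)| ≥ (3·2ⁿ)^{(k/3)ⁿ} > 2^{n·(k/3)ⁿ}`. -/
theorem numQuasigroups_div_two_three {n k : ℕ} (hn : 2 ≤ n) (hk : 0 < k) :
    (2 ∣ k → numQuasigroups n k ≥ 2 ^ (k / 2) ^ n) ∧
    (3 ∣ k → numQuasigroups n k ≥ (3 * 2 ^ n) ^ (k / 3) ^ n ∧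
      (3 * 2 ^ n) ^ (k / 3) ^ n > 2 ^ (n * (k / 3) ^ n)) :=
  numQuasigroups_div_two_three_general hk
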